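/- Let σ = (x,y) be a proper (Z_4 × Z_2)-coloring of a snark G, let F = G − Y_0 be the 2-factor determined by Y_0 = {e : y(e) = 0}, let M = X_0 = {e : x(e) = 0}, and let 𝒫 be the F-matching of H = G − M whose edge set is X_2 = {e : x(e) = 2}. Then the F-complement of 𝒫 is 3-even, i.e. every loop of the F-complement contains an even number of 3-vertices of H. -/

import Mathlib

open SimpleGraph

variable {V : Type*}

/-- A cubic graph: every vertex has exactly `3` neighbours. -/
def IsCubic (G : SimpleGraph V) : Prop :=
  ∀ v : V, (G.neighborSet v).ncard = 3

/-- Two edges (as elements of `Sym2 V`) are adjacent if they are distinct and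
share an endpoint. -/
def EdgesAdj (e₁ e₂ : Sym2 V) : Prop :=
  e₁ ≠ e₂ ∧ ∃ v : V, v ∈ e₁ ∧ v ∈ e₂

/-- `G` has a proper `3`-edge-coloring. -/
def HasProper3EdgeColoring (G : SimpleGraph V) : Prop :=
  ∃ c : Sym2 V → Fin 3,
    ∀ e₁ ∈ G.edgeSet, ∀ e₂ ∈ G.edgeSet, EdgesAdj e₁ e₂ → c e₁ ≠ c e₂

/-- A bridgeless graph: no edge is a bridge. -/
def IsBridgeless (G : SimpleGraph V) : Prop :=
  ∀ e ∈ G.edgeSet, ¬ G.IsBridge e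

/-- A snark: a connected bridgeless cubic graph admitting no proper
`3`-edge-coloring. -/
def IsSnark (G : SimpleGraph V) : Prop :=
  G.Connected ∧ IsBridgeless G ∧ IsCubic G ∧ ¬ HasProper3EdgeColoring G

/-- A proper abelian coloring of `G` by the abelian group `A`: every edge gets a
nonzero color, adjacent edges get distinct colors, and at every vertex the
colors of the incident edges sum to zero. -/
def IsProperAbelianColoring {A : Type*} [AddCommGroup A]
    (G : SimpleGraph V) (σ : Sym2 V → A) : Prop :=
  (∀ e ∈ G.edgeSet, σ e ≠ 0) ∧
  (∀ e₁ ∈ G.edgeSet, ∀ e₂ ∈ G.edgeSet, EdgesAdj e₁ e₂ → σ e₁ ≠ σ e₂) ∧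
  (∀ v : V, ∑ᶠ e ∈ G.incidenceSet v, σ e = 0)

/-- `F` is a `2`-factor of `G`: a spanning `2`-regular subgraph. -/
def IsTwoFactor (G F : SimpleGraph V) : Prop :=
  F ≤ G ∧ ∀ v : V, (F.neighborSet v).ncard = 2

/-- `M` is a matching contained in the edge set of `F`. -/
def IsMatchingIn (M : Set (Sym2 V)) (F : SimpleGraph V) : Prop :=
  M ⊆ F.edgeSet ∧ ∀ e₁ ∈ M, ∀ e₂ ∈ M, e₁ ≠ e₂ → ¬ ∃ v : V, v ∈ e₁ ∧ v ∈ e₂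

/-- A perfect matching in `F`: a matching covering every vertex. -/
def IsPerfectMatchingIn (M : Set (Sym2 V)) (F : SimpleGraph V) : Prop :=
  IsMatchingIn M F ∧ ∀ v : V, ∃ e ∈ M, v ∈ e

/-- A maximum matching in `F`: a matching of maximum cardinality. -/
def IsMaximumMatchingIn (M : Set (Sym2 V)) (F : SimpleGraph V) : Prop :=
  IsMatchingIn M F ∧ ∀ M' : Set (Sym2 V), IsMatchingIn M' F → M'.ncard ≤ M.ncard

/-- A `3`-vertex of `H`: a vertex of degree `3`. -/
def IsThreeVertex (H : SimpleGraph V) (v : V) : Prop := (H.neighborSet v).ncard = 3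

/-- A `2`-vertex of `H`: a vertex of degree `2`. -/
def IsTwoVertex (H : SimpleGraph V) (v : V) : Prop := (H.neighborSet v).ncard = 2

/-- An `F`-path in `H`: a (nontrivial) path in `H` whose two end-vertices are
`3`-vertices of `H`, whose interior vertices are all `2`-vertices of `H`, and
whose two end-edges belong to `F`. -/
structure FPathIn (H F : SimpleGraph V) where
  a : V
  b : V
  walk : H.Walk a b
  isPath : walk.IsPath
  len_pos : 0 < walk.length
  ends_three : IsThreeVertex H a ∧ IsThreeVertex H b
  interior_two : ∀ w ∈ walk.support, w ≠ a → w ≠ b → IsTwoVertex H w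
  end_edges : ∀ e ∈ walk.edges, (a ∈ e ∨ b ∈ e) → e ∈ F.edgeSet

/-- The vertices of an `F`-path. -/
def FPathIn.supp {H F : SimpleGraph V} (P : FPathIn H F) : Set V :=
  {v | v ∈ P.walk.support}

/-- The edges of an `F`-path. -/
def FPathIn.edgeSet {H F : SimpleGraph V} (P : FPathIn H F) : Set (Sym2 V) :=
  {e | e ∈ P.walk.edges}

/-- An `F`-matching of `H`: a collection of pairwise vertex-disjoint `F`-paths
such that every `3`-vertex of `H` lies on (exactly) one of them. -/
def IsFMatching (H F : SimpleGraph V) (Ps : Set (FPathIn H F)) : Prop :=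
  (∀ P ∈ Ps, ∀ Q ∈ Ps, P ≠ Q → Disjoint P.supp Q.supp) ∧
  (∀ v : V, IsThreeVertex H v → ∃ P ∈ Ps, v ∈ P.supp)

/-- The set of edges lying on the paths of an `F`-matching. -/
def FMatchingEdges {H F : SimpleGraph V} (Ps : Set (FPathIn H F)) : Set (Sym2 V) :=
  {e | ∃ P ∈ Ps, e ∈ P.walk.edges}

/-- The `F`-complement of an `F`-matching: the subgraph of `H` induced by the
edges of `H` not lying on the paths of `Ps`. -/
def FComplement {H F : SimpleGraph V} (Ps : Set (FPathIn H F)) : SimpleGraph V :=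
  H.deleteEdges (FMatchingEdges Ps)

/-- The number of `3`-vertices of `H` lying on a connected component `c` of `K`. -/
noncomputable def threeCount (H : SimpleGraph V) {K : SimpleGraph V} (c : K.ConnectedComponent) : ℕ :=
  {v ∈ c.supp | IsThreeVertex H v}.ncard

/-- The graph `K` (an `F`-complement, whose nontrivial components are the
loops) is `3`-even w.r.t. `H`: every component carries an even number of
`3`-vertices of `H`. -/
def IsThreeEvenComplement (H K : SimpleGraph V) : Prop :=
  ∀ c : K.ConnectedComponent, Even (threeCount H c)

/-- A component of `K` is a `3`-odd loop if it carries an odd number of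
`3`-vertices of `H`. -/
def Is3OddLoop (H : SimpleGraph V) {K : SimpleGraph V} (c : K.ConnectedComponent) : Prop :=
  Odd (threeCount H c)

/-- The number of odd components (odd cycles, for a `2`-factor) of `F`. -/
noncomputable def oddCompCount (F : SimpleGraph V) : ℕ :=
  {c : F.ConnectedComponent | Odd c.supp.ncard}.ncard

/-- The number of even components (even cycles, for a `2`-factor) of `F`. -/
noncomputable def evenCompCount (F : SimpleGraph V) : ℕ :=
  {c : F.ConnectedComponent | Even c.supp.ncard}.ncard

/-- The oddness of `G`: the minimum number of odd cycles in a `2`-factor of `G`. -/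
noncomputable def oddness (G : SimpleGraph V) : ℕ :=
  sInf {n : ℕ | ∃ F : SimpleGraph V, IsTwoFactor G F ∧ oddCompCount F = n}

/-- `v` lies on an odd component (odd cycle) of `F`. -/
def OnOddCycle (F : SimpleGraph V) (v : V) : Prop :=
  Odd ((F.connectedComponentMk v).supp.ncard)

/-- A simple `F`-matching: an `F`-matching such that on each of its paths the
only edges lying on odd cycles of `F` are the edges incident to the
end-vertices. -/
def IsSimpleFMatching (H F : SimpleGraph V) (Ps : Set (FPathIn H F)) : Prop :=
  IsFMatching H F Ps ∧
  ∀ P ∈ Ps, ∀ e ∈ P.walk.edges,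
    (e ∈ F.edgeSet ∧ ∀ w ∈ e, OnOddCycle F w) → (P.a ∈ e ∨ P.b ∈ e)

/-- The set `C ⊆ V` carries a `Θ`-graph structure in `H`: two distinct vertices
joined by three internally disjoint paths whose union is exactly the part of
`H` on `C`. -/
def IsThetaOn (H : SimpleGraph V) (C : Set V) : Prop :=
  ∃ a b : V, a ≠ b ∧ ∃ p q r : H.Walk a b,
    p.IsPath ∧ q.IsPath ∧ r.IsPath ∧ p ≠ q ∧ p ≠ r ∧ q ≠ r ∧
    (∀ w ∈ p.support, w ∈ q.support → w = a ∨ w = b) ∧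
    (∀ w ∈ p.support, w ∈ r.support → w = a ∨ w = b) ∧
    (∀ w ∈ q.support, w ∈ r.support → w = a ∨ w = b) ∧
    C = {w | w ∈ p.support ∨ w ∈ q.support ∨ w ∈ r.support} ∧
    (∀ e ∈ H.edgeSet, (∀ w ∈ e, w ∈ C) → e ∈ p.edges ∨ e ∈ q.edges ∨ e ∈ r.edges)

/-- The set `C ⊆ V` carries a kayak-paddle graph structure in `H`: two
vertex-disjoint cycles joined by a path, their union being exactly the part of
`H` on `C`. -/
def IsKayakPaddleOn (H : SimpleGraph V) (C : Set V) : Prop :=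
  ∃ a b : V, ∃ (c₁ : H.Walk a a) (c₂ : H.Walk b b) (p : H.Walk a b),
    c₁.IsCycle ∧ c₂.IsCycle ∧ p.IsPath ∧
    (∀ w ∈ c₁.support, w ∉ c₂.support) ∧
    (∀ w ∈ p.support, w ∈ c₁.support → w = a) ∧
    (∀ w ∈ p.support, w ∈ c₂.support → w = b) ∧
    C = {w | w ∈ c₁.support ∨ w ∈ c₂.support ∨ w ∈ p.support} ∧
    (∀ e ∈ H.edgeSet, (∀ w ∈ e, w ∈ C) → e ∈ c₁.edges ∨ e ∈ c₂.edges ∨ e ∈ p.edges)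

/-- The set `C ⊆ V` carries an even cycle of `H` whose vertices and edges are
exactly the part of `H` on `C`. -/
def IsEvenCycleOn (H : SimpleGraph V) (C : Set V) : Prop :=
  ∃ a : V, ∃ W : H.Walk a a, W.IsCycle ∧ Even W.length ∧
    C = {w | w ∈ W.support} ∧
    (∀ e ∈ H.edgeSet, (∀ w ∈ e, w ∈ C) → e ∈ W.edges)

/-- `Meven` is a perfect matching of the even part `F_even` of the `2`-factor
`F`: a matching of `F` using only edges on even cycles and covering all
vertices of even cycles. -/
def IsPerfectMatchingOfEvenPart (Meven : Set (Sym2 V)) (F : SimpleGraph V) : Prop :=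
  IsMatchingIn Meven F ∧
  (∀ e ∈ Meven, ∀ w ∈ e, ¬ OnOddCycle F w) ∧
  (∀ v : V, ¬ OnOddCycle F v → ∃ e ∈ Meven, v ∈ e)

/-- Two odd components `c₁`, `c₂` of `F` are linked in `H_odd = G − M_even`:
there is a path of `H_odd` from `c₁` to `c₂` all of whose interior vertices
avoid odd cycles of `F` (i.e. are `2`-vertices of `H_odd`). -/
def OddCompLinked (G F : SimpleGraph V) (Meven : Set (Sym2 V))
    (c₁ c₂ : F.ConnectedComponent) : Prop :=
  ∃ u v : V, u ∈ c₁.supp ∧ v ∈ c₂.supp ∧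
    ∃ W : (G.deleteEdges Meven).Walk u v, W.IsPath ∧ 0 < W.length ∧
      ∀ w ∈ W.support, w ≠ u → w ≠ v → ¬ OnOddCycle F w

/-- The odd-cycle-incidence graph `K_odd`: vertices are the odd cycles of `F`,
two of them being adjacent iff they are linked by a path of
`H_odd = G − M_even` with all interior vertices `2`-vertices of `H_odd`
(this is `H_odd` with the edges of `F_odd` contracted and the `2`-vertices
suppressed). -/
def Kodd (G F : SimpleGraph V) (Meven : Set (Sym2 V)) :
    SimpleGraph {c : F.ConnectedComponent // Odd c.supp.ncard} where
  Adj c₁ c₂ := c₁ ≠ c₂ ∧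
    (OddCompLinked G F Meven c₁.1 c₂.1 ∨ OddCompLinked G F Meven c₂.1 c₁.1)
  symm := ⟨fun c₁ c₂ h => ⟨h.1.symm, h.2.symm⟩⟩
  loopless := ⟨fun c h => h.1 rfl⟩

/-- The set of edges of `K` lying on the connected component `c` of `K`. -/
def compEdgeSet (K : SimpleGraph V) (c : K.ConnectedComponent) : Set (Sym2 V) :=
  {e ∈ K.edgeSet | ∃ w, w ∈ e ∧ w ∈ c.supp}

/-- The set `E_Ps` of end-edges of the paths of an `F`-matching `Ps`. -/
def endEdges {H F : SimpleGraph V} (Ps : Set (FPathIn H F)) : Set (Sym2 V) :=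
  {e | ∃ P ∈ Ps, e ∈ P.walk.edges ∧ (P.a ∈ e ∨ P.b ∈ e)}

/-- The edge set attached to a vertex of the loop-cycle-incidence graph `B`:
a component of `F − E_Ps`, a loop of the `F`-complement `ℒ`, or a path of `Ps`. -/
def bEdgeSet (F : SimpleGraph V) {H : SimpleGraph V} (Ps : Set (FPathIn H F)) :
    (F.deleteEdges (endEdges Ps)).ConnectedComponent ⊕
      ((FComplement Ps).ConnectedComponent ⊕ ↥Ps) → Set (Sym2 V)
  | Sum.inl C => compEdgeSet (F.deleteEdges (endEdges Ps)) C
  | Sum.inr (Sum.inl c) => compEdgeSet (FComplement Ps) c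
  | Sum.inr (Sum.inr P) => FPathIn.edgeSet P.1

/-- The loop-cycle-incidence graph `B`: a bipartite graph on
`𝒞* ⊕ (ℒ ⊕ Ps)`, where `𝒞*` is the set of components of `F − E_Ps`, `ℒ` the
set of components (loops) of the `F`-complement and `Ps` the paths of the
`F`-matching; a component of `F − E_Ps` is adjacent to a loop/path iff they
share an edge of `G`. -/
def LoopCycleIncidence (F : SimpleGraph V) {H : SimpleGraph V}
    (Ps : Set (FPathIn H F)) :
    SimpleGraph ((F.deleteEdges (endEdges Ps)).ConnectedComponent ⊕
      ((FComplement Ps).ConnectedComponent ⊕ ↥Ps)) where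
  Adj a b := ((a.isLeft ∧ b.isRight) ∨ (a.isRight ∧ b.isLeft)) ∧
    ∃ e, e ∈ bEdgeSet F Ps a ∧ e ∈ bEdgeSet F Ps b
  symm := by
    constructor
    rintro a b ⟨hs, e, h₁, h₂⟩
    exact ⟨by tauto, e, h₂, h₁⟩
  loopless := by
    constructor
    rintro a ⟨hs, -⟩
    rcases a with a | a <;> simp_all

/-- Remove a set of vertices from a graph (keeping them as isolated vertices):
used to form `B − Ps`. -/
def removeVerts {W : Type*} (B : SimpleGraph W) (S : Set W) : SimpleGraph W where
  Adj a b := B.Adj a b ∧ a ∉ S ∧ b ∉ S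
  symm := ⟨fun a b h => ⟨h.1.symm, h.2.2, h.2.1⟩⟩
  loopless := ⟨fun a h => B.ne_of_adj h.1 rfl⟩

/-- The vertices of `B` corresponding to the paths of `Ps`. -/
def PVerts (F : SimpleGraph V) {H : SimpleGraph V} (Ps : Set (FPathIn H F)) :
    Set ((F.deleteEdges (endEdges Ps)).ConnectedComponent ⊕
      ((FComplement Ps).ConnectedComponent ⊕ ↥Ps)) :=
  {x | ∃ P : ↥Ps, x = Sum.inr (Sum.inr P)}

/-- A permutation snark: a snark having a `2`-factor consisting of precisely
two chordless cycles. -/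
def IsPermutationSnark (G : SimpleGraph V) : Prop :=
  IsSnark G ∧ ∃ F : SimpleGraph V, IsTwoFactor G F ∧
    Nat.card F.ConnectedComponent = 2 ∧
    ∀ u v : V, G.Adj u v → ¬ F.Adj u v →
      F.connectedComponentMk u ≠ F.connectedComponentMk v

/-- The graph obtained from `H` (all of whose vertices have degree `2` or `3`)
by suppressing the degree-`2` vertices is `3`-edge-colorable: there is a
`3`-coloring of the edges which is constant through `2`-vertices and proper at
`3`-vertices. -/
def SuppressedThreeEdgeColorable (H : SimpleGraph V) : Prop :=
  ∃ c : Sym2 V → Fin 3,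
    (∀ v : V, IsThreeVertex H v →
      ∀ e₁ ∈ H.incidenceSet v, ∀ e₂ ∈ H.incidenceSet v, e₁ ≠ e₂ → c e₁ ≠ c e₂) ∧
    (∀ v : V, IsTwoVertex H v →
      ∀ e₁ ∈ H.incidenceSet v, ∀ e₂ ∈ H.incidenceSet v, c e₁ = c e₂)

/-- `e_r(G)`: the minimum cardinality of a set of pairwise non-adjacent edges
of `G` whose removal, followed by suppression of the resulting `2`-vertices,
yields a `3`-edge-colorable (cubic) graph. -/
noncomputable def edgeReductionNumber (G : SimpleGraph V) : ℕ :=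
  sInf {n : ℕ | ∃ R : Set (Sym2 V), IsMatchingIn R G ∧
    SuppressedThreeEdgeColorable (G.deleteEdges R) ∧ R.ncard = n}

/-!
Write `σ = (x, y)`. The edges of the `F`-complement are exactly the edges with `x` odd, and the
three colours at a vertex are distinct, non-zero and sum to `0`. Give an edge with `x` odd the
weight `y + (x - 1) / 2 ∈ ℤ/2` and every other edge the weight `0`. Going through the possible
colour triples, the weights at `v` sum to `1` exactly when no edge at `v` has `x = 0`, i.e. when
`v` is a `3`-vertex of `H`. Summing these vertex sums over a loop counts each of its edges twice,
so the loop carries an even number of `3`-vertices.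
-/

open Finset

namespace SimpleGraph

theorem sum_sum_neighborFinset_eq_zero [Fintype V] (K : SimpleGraph V) [DecidableRel K.Adj]
    (s : Finset V) (hs : ∀ v ∈ s, ∀ u, K.Adj v u → u ∈ s) (f : Sym2 V → ZMod 2) :
    ∑ v ∈ s, ∑ u ∈ K.neighborFinset v, f s(v, u) = 0 := by
  rw [sum_sigma']
  refine sum_involution (fun p _ => ⟨p.2, p.1⟩) (fun p _ => ?_) (fun p hp _ h => ?_)
    (fun p hp => ?_) (fun p _ => rfl)
  · rw [Sym2.eq_swap]
    exact CharTwo.add_self_eq_zero _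
  · rw [mem_sigma, mem_neighborFinset] at hp
    exact hp.2.ne (congrArg Sigma.fst h).symm
  · rw [mem_sigma, mem_neighborFinset] at hp ⊢
    exact ⟨hs _ hp.1 _ hp.2, hp.2.symm⟩

theorem incidenceSet_eq_image_neighborSet (G : SimpleGraph V) (v : V) :
    G.incidenceSet v = (fun u => s(v, u)) '' G.neighborSet v := by
  ext e
  induction e using Sym2.ind with
  | h a b =>
    simp only [incidenceSet, Set.mem_ofPred_eq, mem_edgeSet, Sym2.mem_iff, Set.mem_image,
      mem_neighborSet]
    grind [Sym2.eq_swap, G.adj_symm]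

theorem isThreeVertex_deleteEdges_iff {G : SimpleGraph V} (hG : IsCubic G) (D : Set (Sym2 V))
    (v : V) : IsThreeVertex (G.deleteEdges D) v ↔ ∀ u, G.Adj v u → s(v, u) ∉ D := by
  have hsub : (G.deleteEdges D).neighborSet v ⊆ G.neighborSet v := fun u hu => hu.1
  have hfin : (G.neighborSet v).Finite := Set.finite_of_ncard_pos (by rw [hG v]; norm_num)
  unfold IsThreeVertex
  constructor
  · intro h u hu
    have hu' : u ∈ G.neighborSet v := hu
    rw [← Set.eq_of_subset_of_ncard_le hsub (by rw [hG v, h]) hfin] at hu'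
    exact (deleteEdges_adj.1 hu').2
  · intro h
    rw [Set.Subset.antisymm hsub fun u hu => deleteEdges_adj.2 ⟨hu, h u hu⟩]
    exact hG v

end SimpleGraph

theorem IsProperAbelianColoring.exists_three_neighbors {A : Type*} [AddCommGroup A]
    {G : SimpleGraph V} {σ : Sym2 V → A} (hG : IsCubic G) (hσ : IsProperAbelianColoring G σ)
    (v : V) :
    ∃ u₁ u₂ u₃ : V, G.neighborSet v = {u₁, u₂, u₃} ∧ u₁ ≠ u₂ ∧ u₁ ≠ u₃ ∧ u₂ ≠ u₃ ∧
      σ s(v, u₁) ≠ 0 ∧ σ s(v, u₂) ≠ 0 ∧ σ s(v, u₃) ≠ 0 ∧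
      σ s(v, u₁) ≠ σ s(v, u₂) ∧ σ s(v, u₁) ≠ σ s(v, u₃) ∧ σ s(v, u₂) ≠ σ s(v, u₃) ∧
      σ s(v, u₁) + σ s(v, u₂) + σ s(v, u₃) = 0 := by
  obtain ⟨u₁, u₂, u₃, h₁₂, h₁₃, h₂₃, hN⟩ := Set.ncard_eq_three.1 (hG v)
  have hadj : ∀ u ∈ ({u₁, u₂, u₃} : Set V), G.Adj v u := fun u hu => (hN.symm ▸ hu :)
  have hne {a b : V} (hab : a ≠ b) (ha : G.Adj v a) (hb : G.Adj v b) : σ s(v, a) ≠ σ s(v, b) :=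
    hσ.2.1 _ ha _ hb ⟨fun h => hab (Sym2.congr_right.1 h), v, Sym2.mem_mk_left _ _,
      Sym2.mem_mk_left _ _⟩
  have hsum := hσ.2.2 v
  rw [incidenceSet_eq_image_neighborSet, finsum_mem_image fun _ _ _ _ h => Sym2.congr_right.1 h,
    hN, finsum_mem_insert _ (by simp [h₁₂, h₁₃]) (by simp), finsum_mem_pair h₂₃, ← add_assoc]
    at hsum
  have h₁ := hadj u₁ (by simp)
  have h₂ := hadj u₂ (by simp)
  have h₃ := hadj u₃ (by simp)
  exact ⟨u₁, u₂, u₃, hN, h₁₂, h₁₃, h₂₃, hσ.1 _ h₁, hσ.1 _ h₂, hσ.1 _ h₃,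
    hne h₁₂ h₁ h₂, hne h₁₃ h₁ h₃, hne h₂₃ h₂ h₃, hsum⟩

def oddWeight (a : ZMod 4 × ZMod 2) : ZMod 2 :=
  if a.1 = 1 then a.2 else if a.1 = 3 then a.2 + 1 else 0

theorem fst_ne_zero_and_ne_two_of_oddWeight_ne_zero :
    ∀ a : ZMod 4 × ZMod 2, oddWeight a ≠ 0 → a.1 ≠ 0 ∧ a.1 ≠ 2 := by
  decide

set_option synthInstance.maxSize 2000 in
theorem oddWeight_add_oddWeight_add_oddWeight :
    ∀ a b c : ZMod 4 × ZMod 2, a ≠ 0 → b ≠ 0 → c ≠ 0 → a ≠ b → a ≠ c → b ≠ c → a + b + c = 0 →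
      oddWeight a + oddWeight b + oddWeight c = if a.1 ≠ 0 ∧ b.1 ≠ 0 ∧ c.1 ≠ 0 then 1 else 0 := by
  decide

open Classical in
theorem sum_oddWeight_neighborFinset [Fintype V] {G : SimpleGraph V} [DecidableRel G.Adj]
    (hG : IsCubic G) {σ : Sym2 V → ZMod 4 × ZMod 2} (hσ : IsProperAbelianColoring G σ) (v : V) :
    ∑ u ∈ G.neighborFinset v, oddWeight (σ s(v, u)) =
      if IsThreeVertex (G.deleteEdges {e ∈ G.edgeSet | (σ e).1 = 0}) v then 1 else 0 := by
  obtain ⟨u₁, u₂, u₃, hN, h₁₂, h₁₃, h₂₃, hσ₁, hσ₂, hσ₃, hσ₁₂, hσ₁₃, hσ₂₃, hsum⟩ :=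
    hσ.exists_three_neighbors hG v
  have hF : G.neighborFinset v = {u₁, u₂, u₃} := by
    rw [← coe_inj, coe_neighborFinset, hN]
    push_cast
    rfl
  rw [hF, sum_insert (by simp [h₁₂, h₁₃]), sum_pair h₂₃, ← add_assoc,
    oddWeight_add_oddWeight_add_oddWeight _ _ _ hσ₁ hσ₂ hσ₃ hσ₁₂ hσ₁₃ hσ₂₃ hsum]
  refine if_congr ?_ rfl rfl
  have hadj (u : V) : G.Adj v u ↔ u = u₁ ∨ u = u₂ ∨ u = u₃ := by
    rw [← mem_neighborSet, hN]
    rfl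
  rw [isThreeVertex_deleteEdges_iff hG]
  simp +contextual only [hadj, Set.mem_sep_iff, mem_edgeSet, not_and, forall_eq_or_imp, forall_eq,
    forall_const]

theorem fComplement_adj_iff {G F : SimpleGraph V} {σ : Sym2 V → ZMod 4 × ZMod 2}
    {Ps : Set (FPathIn (G.deleteEdges {e ∈ G.edgeSet | (σ e).1 = 0}) F)}
    (hX₂ : FMatchingEdges Ps = {e ∈ G.edgeSet | (σ e).1 = 2}) (u v : V) :
    (FComplement Ps).Adj u v ↔ G.Adj u v ∧ (σ s(u, v)).1 ≠ 0 ∧ (σ s(u, v)).1 ≠ 2 := by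
  simp only [FComplement, hX₂, deleteEdges_adj, Set.mem_sep_iff, mem_edgeSet]
  tauto

open Classical in
theorem sum_oddWeight_fComplement_neighborFinset [Fintype V] {G F : SimpleGraph V}
    (hG : IsCubic G) {σ : Sym2 V → ZMod 4 × ZMod 2} (hσ : IsProperAbelianColoring G σ)
    {Ps : Set (FPathIn (G.deleteEdges {e ∈ G.edgeSet | (σ e).1 = 0}) F)}
    (hX₂ : FMatchingEdges Ps = {e ∈ G.edgeSet | (σ e).1 = 2}) (v : V) :
    ∑ u ∈ (FComplement Ps).neighborFinset v, oddWeight (σ s(v, u)) =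
      if IsThreeVertex (G.deleteEdges {e ∈ G.edgeSet | (σ e).1 = 0}) v then 1 else 0 := by
  have hK : (FComplement Ps).neighborFinset v =
      (G.neighborFinset v).filter fun u => (σ s(v, u)).1 ≠ 0 ∧ (σ s(v, u)).1 ≠ 2 := by
    ext u
    simp only [mem_neighborFinset, mem_filter, fComplement_adj_iff hX₂]
  rw [← sum_oddWeight_neighborFinset hG hσ v, hK,
    sum_filter_of_ne fun u _ => fst_ne_zero_and_ne_two_of_oddWeight_ne_zero _]

theorem statement14_general {V : Type*} [Fintype V] (G : SimpleGraph V) (hG : IsSnark G)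
    (σ : Sym2 V → ZMod 4 × ZMod 2) (hσ : IsProperAbelianColoring G σ)
    (Ps : Set (FPathIn (G.deleteEdges {e ∈ G.edgeSet | (σ e).1 = 0})
        (G.deleteEdges {e ∈ G.edgeSet | (σ e).2 = 0})))
    (hX2 : FMatchingEdges Ps = {e ∈ G.edgeSet | (σ e).1 = 2}) :
    IsThreeEvenComplement (G.deleteEdges {e ∈ G.edgeSet | (σ e).1 = 0})
      (FComplement Ps) := by
  classical
  intro c
  have hclosed : ∀ v ∈ c.supp.toFinset, ∀ u, (FComplement Ps).Adj v u → u ∈ c.supp.toFinset := by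
    intro v hv u huv
    simp only [Set.mem_toFinset, ConnectedComponent.mem_supp_iff] at hv ⊢
    rw [← hv, ConnectedComponent.connectedComponentMk_eq_of_adj huv.symm]
  rw [threeCount, ← ZMod.natCast_eq_zero_iff_even, Set.ncard_eq_toFinset_card',
    Set.toFinset_ofPred]
  calc _ = ∑ v ∈ c.supp.toFinset,
        if IsThreeVertex (G.deleteEdges {e ∈ G.edgeSet | (σ e).1 = 0}) v then (1 : ZMod 2)
        else 0 := by
        rw [sum_boole]
        congr 2
        ext v
        simp
    _ = ∑ v ∈ c.supp.toFinset, ∑ u ∈ (FComplement Ps).neighborFinset v, oddWeight (σ s(v, u)) := by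
        simp_rw [sum_oddWeight_fComplement_neighborFinset hG.2.2.1 hσ hX2]
    _ = 0 := sum_sum_neighborFinset_eq_zero _ _ hclosed fun e => oddWeight (σ e)

theorem statement14 {V : Type*} [Fintype V] (G : SimpleGraph V) (hG : IsSnark G)
    (σ : Sym2 V → ZMod 4 × ZMod 2) (hσ : IsProperAbelianColoring G σ)
    (Ps : Set (FPathIn (G.deleteEdges {e ∈ G.edgeSet | (σ e).1 = 0})
        (G.deleteEdges {e ∈ G.edgeSet | (σ e).2 = 0})))
    (hPs : IsFMatching (G.deleteEdges {e ∈ G.edgeSet | (σ e).1 = 0})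
        (G.deleteEdges {e ∈ G.edgeSet | (σ e).2 = 0}) Ps)
    (hX2 : FMatchingEdges Ps = {e ∈ G.edgeSet | (σ e).1 = 2}) :
    IsThreeEvenComplement (G.deleteEdges {e ∈ G.edgeSet | (σ e).1 = 0})
      (FComplement Ps) :=
  statement14_general G hG σ hσ Ps hX2
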